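/- If G is a pure stabilizer group, M a Pauli observable with ±M ∉ G, k ∈ {0,1}, ρ = (1/2^n)∑_{S∈G}S, and Π = (I + (-1)^k M)/2, then Π ρ Π, after normalization by its trace, equals (1/2^n)∑_{S∈G'}S where G' = ⟨G_M, (-1)^k M⟩ and G_M is the subgroup of G commuting with M. -/

import Mathlib

open Matrix Complex BigOperators

noncomputable def pauli : Fin 4 → Matrix (Fin 2) (Fin 2) ℂ
  | 0 => 1
  | 1 => !![0, 1; 1, 0]
  | 2 => !![0, -Complex.I; Complex.I, 0]
  | 3 => !![1, 0; 0, -1]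

noncomputable def PauliOp (n : ℕ) (f : Fin n → Fin 4) :
    Matrix (Fin n → Fin 2) (Fin n → Fin 2) ℂ :=
  fun i j => ∏ k, pauli (f k) (i k) (j k)

set_option linter.unreachableTactic false
set_option linter.unusedTactic false
set_option maxHeartbeats 1000000

lemma pauli_mul_self (a : Fin 4) : pauli a * pauli a = 1 := by
  fin_cases a <;>
  · ext i j
    fin_cases i <;> fin_cases j <;>
      simp [pauli, Matrix.mul_apply, Fin.sum_univ_two, Matrix.one_apply]

lemma pauli_comm_or_anticomm (a b : Fin 4) :
    pauli a * pauli b = pauli b * pauli a ∨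
      pauli a * pauli b = -(pauli b * pauli a) := by
  fin_cases a <;> fin_cases b <;>
    first
    | · left
        ext i j
        fin_cases i <;> fin_cases j <;>
          simp [pauli, Matrix.mul_apply, Fin.sum_univ_two, Matrix.one_apply] <;> ring
    | · right
        ext i j
        fin_cases i <;> fin_cases j <;>
          simp [pauli, Matrix.mul_apply, Fin.sum_univ_two, Matrix.one_apply] <;> ring

lemma pauli_trace_mul (a b : Fin 4) :
    trace (pauli a * pauli b) = if a = b then 2 else 0 := by
  fin_cases a <;> fin_cases b <;>
    simp [pauli, Matrix.trace, Matrix.mul_apply, Fin.sum_univ_two, Matrix.one_apply,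
      Matrix.diag, Complex.I_mul_I] <;> ring_nf <;> simp [Complex.I_sq]

lemma PauliOp_mul_apply (n : ℕ) (f g : Fin n → Fin 4) (i j : Fin n → Fin 2) :
    (PauliOp n f * PauliOp n g) i j = ∏ k, (pauli (f k) * pauli (g k)) (i k) (j k) := by
  rw [Matrix.mul_apply]
  simp only [PauliOp, Matrix.mul_apply]
  simp only [← Finset.prod_mul_distrib]
  rw [← Fintype.piFinset_univ,
    ← Finset.prod_univ_sum (fun _ => (Finset.univ : Finset (Fin 2)))
      (fun k v => pauli (f k) (i k) v * pauli (g k) v (j k))]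

lemma prod_one_apply (n : ℕ) (i j : Fin n → Fin 2) :
    ∏ k, (1 : Matrix (Fin 2) (Fin 2) ℂ) (i k) (j k) = (1 : Matrix (Fin n → Fin 2) (Fin n → Fin 2) ℂ) i j := by
  by_cases h : i = j
  · subst h; simp [Matrix.one_apply]
  · rw [Matrix.one_apply_ne h]
    obtain ⟨k, hk⟩ := Function.ne_iff.mp h
    exact Finset.prod_eq_zero (Finset.mem_univ k) (Matrix.one_apply_ne hk)

lemma PauliOp_mul_self (n : ℕ) (f : Fin n → Fin 4) : PauliOp n f * PauliOp n f = 1 := by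
  ext i j
  rw [PauliOp_mul_apply]
  simp only [pauli_mul_self]
  exact prod_one_apply n i j

lemma trace_PauliOp_mul (n : ℕ) (f g : Fin n → Fin 4) :
    trace (PauliOp n f * PauliOp n g) = if f = g then (2:ℂ)^n else 0 := by
  have : trace (PauliOp n f * PauliOp n g) = ∏ k, trace (pauli (f k) * pauli (g k)) := by
    simp only [Matrix.trace, Matrix.diag]
    simp only [PauliOp_mul_apply]
    rw [← Fintype.piFinset_univ,
      ← Finset.prod_univ_sum (fun _ => (Finset.univ : Finset (Fin 2)))
        (fun k v => (pauli (f k) * pauli (g k)) v v)]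
  rw [this]
  simp only [pauli_trace_mul]
  by_cases h : f = g
  · subst h; simp
  · simp only [if_neg h]
    obtain ⟨k, hk⟩ := Function.ne_iff.mp h
    exact Finset.prod_eq_zero (Finset.mem_univ k) (if_neg hk)

lemma PauliOp_zero (n : ℕ) : PauliOp n (fun _ => 0) = 1 := by
  ext i j
  show ∏ k, pauli 0 (i k) (j k) = _
  have : ∀ k : Fin n, pauli 0 (i k) (j k) = (1 : Matrix (Fin 2) (Fin 2) ℂ) (i k) (j k) := fun k => rfl
  simp only [this]
  exact prod_one_apply n i j

lemma pauli_comm_eps (a b : Fin 4) : ∃ ε : ℂ, (ε = 1 ∨ ε = -1) ∧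
    pauli a * pauli b = ε • (pauli b * pauli a) := by
  rcases pauli_comm_or_anticomm a b with h | h
  · exact ⟨1, Or.inl rfl, by simpa using h⟩
  · exact ⟨-1, Or.inr rfl, by simpa using h⟩

lemma PauliOp_comm_or_anticomm (n : ℕ) (f g : Fin n → Fin 4) :
    ∃ ε : ℂ, (ε = 1 ∨ ε = -1) ∧
      PauliOp n f * PauliOp n g = ε • (PauliOp n g * PauliOp n f) := by
  choose ε hsign heq using fun k => pauli_comm_eps (f k) (g k)
  refine ⟨∏ k, ε k, ?_, ?_⟩
  · have h2 : (∏ k, ε k) * (∏ k, ε k) = 1 := by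
      rw [← Finset.prod_mul_distrib]
      refine Finset.prod_eq_one fun k _ => ?_
      rcases hsign k with h | h <;> simp [h]
    exact mul_self_eq_one_iff.mp h2
  · ext i j
    rw [PauliOp_mul_apply, Matrix.smul_apply, PauliOp_mul_apply]
    simp only [heq, Matrix.smul_apply, smul_eq_mul]
    rw [Finset.prod_mul_distrib]

/-- Stabilizer measurement-update rule: projecting the stabilizer state of G
onto the (-1)^k-eigenspace of M and renormalizing yields the stabilizer state
of the group G' = ⟨G_M, (-1)^k M⟩. -/
theorem measurement_update_rule (n : ℕ)
    (G G_M G' : Finset (Matrix (Fin n → Fin 2) (Fin n → Fin 2) ℂ))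
    (hpauli : ∀ P ∈ G, ∃ (s : ZMod 2) (f : Fin n → Fin 4),
      P = ((-1 : ℂ) ^ s.val) • PauliOp n f)
    (hone : (1 : Matrix (Fin n → Fin 2) (Fin n → Fin 2) ℂ) ∈ G)
    (hmul : ∀ P ∈ G, ∀ Q ∈ G, P * Q ∈ G)
    (hcomm : ∀ P ∈ G, ∀ Q ∈ G, P * Q = Q * P)
    (hnegI : (-1 : Matrix (Fin n → Fin 2) (Fin n → Fin 2) ℂ) ∉ G)
    (hcard : G.card = 2 ^ n)
    (f : Fin n → Fin 4)
    (hM : PauliOp n f ∉ G) (hM' : -PauliOp n f ∉ G)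
    (hanti : ∃ g ∈ G, g * PauliOp n f = -(PauliOp n f * g))
    (hGM : ∀ g, g ∈ G_M ↔ g ∈ G ∧ g * PauliOp n f = PauliOp n f * g)
    (k : ZMod 2)
    (hG' : (G' : Set (Matrix (Fin n → Fin 2) (Fin n → Fin 2) ℂ)) =
      Submonoid.closure
        ((G_M : Set (Matrix (Fin n → Fin 2) (Fin n → Fin 2) ℂ)) ∪
          {((-1 : ℂ) ^ k.val) • PauliOp n f})) :
    (trace
        (((2 : ℂ)⁻¹ • (1 + ((-1 : ℂ) ^ k.val) • PauliOp n f)) *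
          (((2 : ℂ) ^ n)⁻¹ • ∑ g ∈ G, g) *
          ((2 : ℂ)⁻¹ • (1 + ((-1 : ℂ) ^ k.val) • PauliOp n f))))⁻¹ •
      (((2 : ℂ)⁻¹ • (1 + ((-1 : ℂ) ^ k.val) • PauliOp n f)) *
        (((2 : ℂ) ^ n)⁻¹ • ∑ g ∈ G, g) *
        ((2 : ℂ)⁻¹ • (1 + ((-1 : ℂ) ^ k.val) • PauliOp n f))) =
    ((2 : ℂ) ^ n)⁻¹ • ∑ g ∈ G', g := by
  set M : Matrix (Fin n → Fin 2) (Fin n → Fin 2) ℂ := PauliOp n f with hMdef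
  set c : ℂ := (-1 : ℂ) ^ k.val with hcdef
  have hkval : k.val = 0 ∨ k.val = 1 := by
    have := ZMod.val_lt k; omega
  have hc : c = 1 ∨ c = -1 := by
    rcases hkval with h | h <;> simp [hcdef, h]
  have hcc : c * c = 1 := by rcases hc with h | h <;> simp [h]
  set Mk : Matrix (Fin n → Fin 2) (Fin n → Fin 2) ℂ := c • M with hMkdef
  have hM2 : M * M = 1 := PauliOp_mul_self n f
  have hMk2 : Mk * Mk = 1 := by
    rw [hMkdef, Matrix.smul_mul, Matrix.mul_smul, smul_smul, hcc, hM2, one_smul]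
  have hMkG : Mk ∉ G := by
    rcases hc with h | h
    · rw [hMkdef, h, one_smul]; exact hM
    · rw [hMkdef, h, neg_smul, one_smul]; exact hM'
  -- every element of G squares to 1
  have hsq : ∀ g ∈ G, g * g = 1 := by
    intro g hg
    obtain ⟨s, f', rfl⟩ := hpauli g hg
    rw [Matrix.smul_mul, Matrix.mul_smul, smul_smul, ← mul_pow, PauliOp_mul_self]
    norm_num
  -- elements of G commute or anticommute with M
  have hdichot : ∀ g ∈ G, g * M = M * g ∨ g * M = -(M * g) := by
    intro g hg
    obtain ⟨s, f', rfl⟩ := hpauli g hg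
    obtain ⟨ε, hε, heq⟩ := PauliOp_comm_or_anticomm n f' f
    rcases hε with h | h
    · left
      rw [Matrix.smul_mul, Matrix.mul_smul, heq, h, one_smul]
    · right
      rw [Matrix.smul_mul, Matrix.mul_smul, heq, h, neg_smul, one_smul, smul_neg]
  have hGMsub : G_M ⊆ G := fun g hg => ((hGM g).mp hg).1
  have honeGM : (1 : Matrix (Fin n → Fin 2) (Fin n → Fin 2) ℂ) ∈ G_M :=
    (hGM 1).mpr ⟨hone, by rw [one_mul, mul_one]⟩
  have hcommMk : ∀ g ∈ G_M, g * Mk = Mk * g := by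
    intro g hg
    have h := ((hGM g).mp hg).2
    rw [hMkdef, Matrix.mul_smul, Matrix.smul_mul, h]
  have hanticommMk : ∀ g ∈ G, g ∉ G_M → Mk * g = -(g * Mk) := by
    intro g hg hgm
    have h : g * M = -(M * g) := by
      rcases hdichot g hg with h | h
      · exact absurd ((hGM g).mpr ⟨hg, h⟩) hgm
      · exact h
    rw [hMkdef, Matrix.mul_smul, Matrix.smul_mul, h, smul_neg, neg_neg]
  -- traces
  have htr1 : trace (1 : Matrix (Fin n → Fin 2) (Fin n → Fin 2) ℂ) = (2:ℂ)^n := by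
    rw [Matrix.trace_one]
    simp [Fintype.card_fun]
  have htrg : ∀ g ∈ G, g ≠ 1 → trace g = 0 := by
    intro g hg hne
    obtain ⟨s, f', hgeq⟩ := hpauli g hg
    have htrP : trace (PauliOp n f') = if f' = (fun _ => 0) then (2:ℂ)^n else 0 := by
      have := trace_PauliOp_mul n f' (fun _ => 0)
      rwa [PauliOp_zero, mul_one] at this
    by_cases hf0 : f' = (fun _ => 0)
    · exfalso
      rw [hf0, PauliOp_zero] at hgeq
      have hsval : s.val = 0 ∨ s.val = 1 := by have := ZMod.val_lt s; omega
      rcases hsval with h | h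
      · rw [h, pow_zero, one_smul] at hgeq
        exact hne hgeq
      · rw [h, pow_one, neg_smul, one_smul] at hgeq
        rw [hgeq] at hg
        exact hnegI (by simpa using hg)
    · rw [hgeq, Matrix.trace_smul, htrP, if_neg hf0, smul_zero]
  have htrgMk : ∀ g ∈ G, trace (g * Mk) = 0 := by
    intro g hg
    obtain ⟨s, f', hgeq⟩ := hpauli g hg
    by_cases hff : f' = f
    · exfalso
      rw [hff] at hgeq
      have hsval : s.val = 0 ∨ s.val = 1 := by have := ZMod.val_lt s; omega
      rcases hsval with h | h
      · rw [h, pow_zero, one_smul] at hgeq; rw [hgeq] at hg; exact hM hg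
      · rw [h, pow_one, neg_smul, one_smul] at hgeq; rw [hgeq] at hg; exact hM' hg
    · rw [hgeq, hMkdef, Matrix.smul_mul, Matrix.mul_smul, smul_smul,
        Matrix.trace_smul, trace_PauliOp_mul, if_neg hff, smul_zero]
  -- algebra
  set S := ∑ g ∈ G, g with hSdef
  set A := ∑ g ∈ G_M, g with hAdef
  set P1 : Matrix (Fin n → Fin 2) (Fin n → Fin 2) ℂ := 1 + Mk with hP1def
  have hkey : ∀ g ∈ G, P1 * g * P1 = if g ∈ G_M then (2:ℂ) • (g + g * Mk) else 0 := by
    intro g hg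
    have expand : P1 * g * P1 = g + g * Mk + Mk * g + Mk * g * Mk := by
      rw [hP1def]; noncomm_ring
    by_cases hgm : g ∈ G_M
    · rw [if_pos hgm, expand, ← hcommMk g hgm, mul_assoc, hMk2, mul_one, two_smul]
      abel
    · rw [if_neg hgm, expand, hanticommMk g hg hgm, neg_mul, mul_assoc, hMk2, mul_one]
      abel
  have hPSP : P1 * S * P1 = (2:ℂ) • (A + A * Mk) := by
    rw [hSdef, Finset.mul_sum, Finset.sum_mul]
    rw [Finset.sum_congr rfl (fun g hg => hkey g hg)]
    rw [Finset.sum_ite_mem, Finset.inter_eq_right.mpr hGMsub]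
    rw [← Finset.smul_sum, Finset.sum_add_distrib, ← Finset.sum_mul, ← hAdef]
  have hX : ((2:ℂ)⁻¹ • P1) * (((2:ℂ)^n)⁻¹ • S) * ((2:ℂ)⁻¹ • P1)
      = ((2:ℂ) * 2^n)⁻¹ • (A + A * Mk) := by
    rw [Matrix.smul_mul, Matrix.mul_smul, Matrix.smul_mul, Matrix.mul_smul,
      Matrix.smul_mul, smul_smul, smul_smul, hPSP, smul_smul]
    congr 1
    have hr : (2:ℂ)^n ≠ 0 := pow_ne_zero _ two_ne_zero
    field_simp
  -- traces
  have htrA : trace A = (2:ℂ)^n := by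
    rw [hAdef, Matrix.trace_sum]
    rw [Finset.sum_eq_single_of_mem 1 honeGM (fun g hg hne => htrg g (hGMsub hg) hne)]
    exact htr1
  have htrAMk : trace (A * Mk) = 0 := by
    rw [hAdef, Finset.sum_mul, Matrix.trace_sum]
    exact Finset.sum_eq_zero fun g hg => htrgMk g (hGMsub hg)
  -- structure of G'
  have hGMmul : ∀ a ∈ G_M, ∀ b ∈ G_M, a * b ∈ G_M := by
    intro a ha b hb
    obtain ⟨haG, haM⟩ := (hGM a).mp ha
    obtain ⟨hbG, hbM⟩ := (hGM b).mp hb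
    refine (hGM _).mpr ⟨hmul a haG b hbG, ?_⟩
    rw [mul_assoc, hbM, ← mul_assoc, haM, mul_assoc]
  set T : Set (Matrix (Fin n → Fin 2) (Fin n → Fin 2) ℂ) :=
    ↑G_M ∪ (fun g => g * Mk) '' ↑G_M with hTdef
  have hTmul : ∀ a ∈ T, ∀ b ∈ T, a * b ∈ T := by
    intro a ha b hb
    rcases ha with ha | ⟨a', ha', rfl⟩ <;> rcases hb with hb | ⟨b', hb', rfl⟩ <;>
      rw [Finset.mem_coe] at *
    · exact Or.inl (hGMmul a ha b hb)
    · refine Or.inr ⟨a * b', hGMmul a ha b' (Finset.mem_coe.mp hb'), ?_⟩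
      dsimp only
      rw [mul_assoc]
    · refine Or.inr ⟨a' * b, hGMmul a' (Finset.mem_coe.mp ha') b hb, ?_⟩
      dsimp only
      rw [mul_assoc, hcommMk b hb, ← mul_assoc]
    · refine Or.inl ?_
      have heq : a' * Mk * (b' * Mk) = a' * b' := by
        rw [mul_assoc, ← mul_assoc Mk, ← hcommMk b' (Finset.mem_coe.mp hb'),
          mul_assoc, hMk2, mul_one]
      rw [heq]
      exact Finset.mem_coe.mpr
        (hGMmul a' (Finset.mem_coe.mp ha') b' (Finset.mem_coe.mp hb'))
  let T' : Submonoid (Matrix (Fin n → Fin 2) (Fin n → Fin 2) ℂ) :=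
    { carrier := T
      one_mem' := Or.inl honeGM
      mul_mem' := fun {a b} ha hb => hTmul a ha b hb }
  have hclo : (Submonoid.closure ((G_M : Set _) ∪ {Mk}) : Set _) = T := by
    have h1 : Submonoid.closure ((G_M : Set _) ∪ {Mk}) ≤ T' := by
      refine Submonoid.closure_le.mpr ?_
      intro x hx
      rcases hx with hx | hx
      · exact Or.inl hx
      · rw [Set.mem_singleton_iff] at hx
        subst hx
        exact Or.inr ⟨1, honeGM, one_mul _⟩
    refine subset_antisymm (fun x hx => h1 hx) ?_
    intro x hx
    rcases hx with hx | ⟨g, hg, rfl⟩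
    · exact Submonoid.subset_closure (Or.inl hx)
    · exact Submonoid.mul_mem _
        (Submonoid.subset_closure (Or.inl hg))
        (Submonoid.subset_closure (Or.inr rfl))
  have hG'' : (G' : Set _) = T := by rw [hG']; exact hclo
  have hG'fin : G' = G_M ∪ G_M.image (fun g => g * Mk) := by
    apply Finset.coe_injective
    rw [Finset.coe_union, Finset.coe_image, hG'']
  have hinj : ∀ a ∈ G_M, ∀ b ∈ G_M, a * Mk = b * Mk → a = b := by
    intro a _ b _ h
    have := congrArg (fun x => x * Mk) h
    simpa [mul_assoc, hMk2] using this
  have hdisj : Disjoint G_M (G_M.image (fun g => g * Mk)) := by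
    rw [Finset.disjoint_left]
    intro x hx hx2
    obtain ⟨h, hh, hxeq⟩ := Finset.mem_image.mp hx2
    apply hMkG
    have h1 : h * x = Mk := by
      rw [← hxeq, ← mul_assoc, hsq h (hGMsub hh), one_mul]
    rw [← h1]
    exact hmul h (hGMsub hh) x (hGMsub hx)
  have hsumG' : ∑ g ∈ G', g = A + A * Mk := by
    rw [hG'fin, Finset.sum_union hdisj, Finset.sum_image hinj, ← Finset.sum_mul, ← hAdef]
  -- finish
  rw [hX, hsumG', Matrix.trace_smul, Matrix.trace_add, htrA, htrAMk, add_zero,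
    smul_eq_mul, smul_smul]
  congr 1
  have hr : (2:ℂ)^n ≠ 0 := pow_ne_zero _ two_ne_zero
  field_simp
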